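/- arXiv:1610.06783 — 7 statements merged into one kernel-verified Lean document; each statement's English description precedes it below -/
import Mathlib

section
/- A map f : H → K between hypergroups is an isomorphism if and only if f is an injective reflector. -/
/-- Product of two subsets under a multivalued operation: union of elementwise products. -/
def hProd {α : Type*} (m : α → α → Set α) (A B : Set α) : Set α :=
  ⋃ a ∈ A, ⋃ b ∈ B, m a b

/-- Associativity of a multivalued operation. -/
def HAssoc {α : Type*} (m : α → α → Set α) : Prop :=
  ∀ x y z : α, hProd m (m x y) {z} = hProd m {x} (m y z)

/-- Reproductivity: x.H = H = H.x. -/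
def HRepro {α : Type*} (m : α → α → Set α) : Prop :=
  ∀ x : α, hProd m {x} Set.univ = Set.univ ∧ hProd m Set.univ {x} = Set.univ

/-- A hypergroup: nonempty carrier with associative, reproductive multivalued operation. -/
def IsHypergroup {α : Type*} (m : α → α → Set α) : Prop :=
  Nonempty α ∧ HAssoc m ∧ HRepro m
/-- A morphism of multivalued structures: f(x.y) = f(x).f(y). -/
def HMorph {α β : Type*} (m₁ : α → α → Set α) (m₂ : β → β → Set β) (f : α → β) : Prop :=
  ∀ x y : α, f '' (m₁ x y) = m₂ (f x) (f y)
/-- A reflector: a surjective map satisfying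
f⁻¹f(x.y) = f⁻¹(f(x).f(y)) = x.f⁻¹f(y) = f⁻¹f(x).y for all x, y. -/
def IsReflector {α β : Type*} (m₁ : α → α → Set α) (m₂ : β → β → Set β) (f : α → β) : Prop :=
  Function.Surjective f ∧ ∀ x y : α,
    f ⁻¹' (f '' (m₁ x y)) = f ⁻¹' (m₂ (f x) (f y)) ∧
    f ⁻¹' (f '' (m₁ x y)) = hProd m₁ {x} (f ⁻¹' {f y}) ∧
    f ⁻¹' (f '' (m₁ x y)) = hProd m₁ (f ⁻¹' {f x}) {y}
/-- An isomorphism: a bijective morphism whose inverse is also a morphism. -/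
def HIso {α β : Type*} [Nonempty α] (m₁ : α → α → Set α) (m₂ : β → β → Set β) (f : α → β) : Prop :=
  Function.Bijective f ∧ HMorph m₁ m₂ f ∧ HMorph m₂ m₁ (Function.invFun f)

lemma hProd_single {α : Type*} (m : α → α → Set α) (x y : α) :
    hProd m {x} {y} = m x y := by
  simp [hProd]

theorem iso_iff_injective_reflector {α β : Type*}
    (m₁ : α → α → Set α) (m₂ : β → β → Set β)
    (h₁ : IsHypergroup m₁) (h₂ : IsHypergroup m₂) [Nonempty α] (f : α → β) :
    HIso m₁ m₂ f ↔ (IsReflector m₁ m₂ f ∧ Function.Injective f) := by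
  constructor
  · rintro ⟨hbij, hmor, _⟩
    have hinj := hbij.1
    refine ⟨⟨hbij.2, fun x y => ?_⟩, hinj⟩
    have h1 : f ⁻¹' (f '' (m₁ x y)) = m₁ x y := Set.preimage_image_eq _ hinj
    have h2 : f ⁻¹' {f y} = {y} := by
      ext a; simp [hinj.eq_iff]
    have h3 : f ⁻¹' {f x} = {x} := by
      ext a; simp [hinj.eq_iff]
    refine ⟨?_, ?_, ?_⟩
    · rw [h1, ← hmor x y, Set.preimage_image_eq _ hinj]
    · rw [h1, h2, hProd_single]
    · rw [h1, h3, hProd_single]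
  · rintro ⟨⟨hsurj, href⟩, hinj⟩
    have hbij : Function.Bijective f := ⟨hinj, hsurj⟩
    have hmor : HMorph m₁ m₂ f := by
      intro x y
      have h1 := (href x y).1
      have : m₁ x y = f ⁻¹' (m₂ (f x) (f y)) := by
        rw [← Set.preimage_image_eq (m₁ x y) hinj, h1]
      rw [this, Set.image_preimage_eq _ hsurj]
    refine ⟨hbij, hmor, fun u v => ?_⟩
    set g := Function.invFun f with hg
    have hfg : ∀ b, f (g b) = b := fun b => Function.invFun_eq (hsurj b)
    have hgf : Function.LeftInverse g f := Function.leftInverse_invFun hinj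
    have : m₂ u v = f '' (m₁ (g u) (g v)) := by
      rw [hmor, hfg, hfg]
    rw [this, ← Set.image_comp]
    simp [Function.comp, hgf.id]
    exact Set.image_congr (fun a _ => hgf a) |>.trans (Set.image_id _)
end

section
/- Every reflector f between hypergroups satisfies f⁻¹f(x).f⁻¹f(y) = f⁻¹(f(x).f(y)) for all x, y. -/
theorem reflector_preimage_prod {α β : Type*}
    (m₁ : α → α → Set α) (m₂ : β → β → Set β)
    (h₁ : IsHypergroup m₁) (h₂ : IsHypergroup m₂)
    (f : α → β) (hf : IsReflector m₁ m₂ f) (x y : α) :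
    hProd m₁ (f ⁻¹' {f x}) (f ⁻¹' {f y}) = f ⁻¹' (m₂ (f x) (f y)) := by
  have key : ∀ a : α, f a = f x →
      hProd m₁ {a} (f ⁻¹' {f y}) = f ⁻¹' (m₂ (f x) (f y)) := by
    intro a ha
    have h := hf.2 a y
    rw [← h.2.1, h.1, ha]
  ext z
  simp only [hProd, Set.mem_iUnion, Set.mem_preimage, Set.mem_singleton_iff]
  constructor
  · rintro ⟨a, ha, b, hb, hz⟩
    have := key a ha
    have hz' : z ∈ hProd m₁ {a} (f ⁻¹' {f y}) := by
      simp only [hProd, Set.mem_iUnion, Set.mem_preimage, Set.mem_singleton_iff]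
      exact ⟨a, rfl, b, hb, hz⟩
    rw [this] at hz'
    exact hz'
  · intro hz
    have := (key x rfl).symm
    rw [Set.ext_iff] at this
    have hz' := (this z).mp hz
    simp only [hProd, Set.mem_iUnion, Set.mem_preimage, Set.mem_singleton_iff] at hz'
    obtain ⟨a, ha, b, hb, h⟩ := hz'
    exact ⟨a, by rw [ha], b, hb, h⟩
end

section
/- Let G be a group, and H ⊆ K subgroups with K invariant modulo H. Then the canonical map f : G/H → G/K sending xH to xK is a reflector between the coset hypergroups G/H and G/K. -/
open Pointwise

/-- The multivalued operation on left cosets: (xH).(yH) = {xhyH : h ∈ H}. -/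
def cosetMul (G : Type*) [Group G] (H : Subgroup G) (a b : G ⧸ H) : Set (G ⧸ H) :=
  {c | ∃ x y h : G, h ∈ H ∧ a = (x : G ⧸ H) ∧ b = (y : G ⧸ H) ∧ c = ((x * h * y : G) : G ⧸ H)}
/-- K is invariant modulo H: KxK = HxK = KxH for all x ∈ G. -/
def InvMod {G : Type*} [Group G] (H K : Subgroup G) : Prop :=
  ∀ x : G, (K : Set G) * ({x} : Set G) * (K : Set G) = (H : Set G) * ({x} : Set G) * (K : Set G) ∧
    (K : Set G) * ({x} : Set G) * (K : Set G) = (K : Set G) * ({x} : Set G) * (H : Set G)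

section Aux

variable {G : Type*} [Group G]

lemma mem_hProd_left {α : Type*} (m : α → α → Set α) (a : α) (B : Set α) (c : α) :
    c ∈ hProd m {a} B ↔ ∃ b ∈ B, c ∈ m a b := by
  simp [hProd]

lemma mem_hProd_right {α : Type*} (m : α → α → Set α) (A : Set α) (b : α) (c : α) :
    c ∈ hProd m A {b} ↔ ∃ a ∈ A, c ∈ m a b := by
  simp [hProd]

lemma mem_cosetMul {H : Subgroup G} {x y : G} {c : G ⧸ H} :
    c ∈ cosetMul G H (x : G ⧸ H) (y : G ⧸ H) ↔
      ∃ h ∈ H, c = ((x * h * y : G) : G ⧸ H) := by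
  constructor
  · rintro ⟨x', y', h, hh, hx, hy, rfl⟩
    rw [QuotientGroup.eq] at hx hy
    refine ⟨(x⁻¹ * x') * h, H.mul_mem hx hh, ?_⟩
    rw [QuotientGroup.eq]
    have e : (x' * h * y')⁻¹ * (x * (x⁻¹ * x' * h) * y) = (y⁻¹ * y')⁻¹ := by group
    rw [e]
    exact H.inv_mem hy
  · rintro ⟨h, hh, rfl⟩
    exact ⟨x, y, h, hh, rfl, rfl, rfl⟩

lemma out_mk {H K : Subgroup G} (hHK : H ≤ K) (z : G) :
    ((Quotient.out ((z : G ⧸ H)) : G) : G ⧸ K) = (z : G ⧸ K) := by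
  have h1 : (((z : G ⧸ H).out : G) : G ⧸ H) = (z : G ⧸ H) := QuotientGroup.out_eq' _
  rw [QuotientGroup.eq] at h1 ⊢
  exact hHK h1

lemma reflector_aux (H K : Subgroup G) (hHK : H ≤ K) (hinv : InvMod H K)
    (g : G ⧸ H → G ⧸ K) (hg : ∀ z : G, g (z : G ⧸ H) = (z : G ⧸ K)) :
    IsReflector (cosetMul G H) (cosetMul G K) g := by
  constructor
  · intro c
    obtain ⟨z, rfl⟩ := QuotientGroup.mk_surjective c
    exact ⟨(z : G ⧸ H), hg z⟩
  intro x y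
  obtain ⟨x₀, rfl⟩ := QuotientGroup.mk_surjective x
  obtain ⟨y₀, rfl⟩ := QuotientGroup.mk_surjective y
  set P : G ⧸ H → Prop := fun c => ∃ h ∈ H, ∃ k ∈ K, c = ((x₀ * h * y₀ * k : G) : G ⧸ H)
    with hPdef
  have QtoP : ∀ (k k' : G), k ∈ K → k' ∈ K → ∀ c : G ⧸ H,
      c = ((x₀ * k * y₀ * k' : G) : G ⧸ H) → P c := by
    intro k k' hk hk' c hc
    have hmem : k * y₀ * k' ∈ (K : Set G) * ({y₀} : Set G) * (K : Set G) :=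
      Set.mul_mem_mul (Set.mul_mem_mul hk rfl) hk'
    rw [(hinv y₀).1] at hmem
    obtain ⟨u, hu, v, hv, huv⟩ := Set.mem_mul.mp hmem
    obtain ⟨h, hh, w, hw, hwu⟩ := Set.mem_mul.mp hu
    rw [hw] at hwu
    rw [← hwu] at huv
    refine ⟨h, hh, v, hv, ?_⟩
    rw [hc]
    have e : x₀ * k * y₀ * k' = x₀ * h * y₀ * v := by
      calc x₀ * k * y₀ * k' = x₀ * (k * y₀ * k') := by group
        _ = x₀ * (h * y₀ * v) := by rw [huv]
        _ = x₀ * h * y₀ * v := by group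
    rw [e]
  -- key1 : f⁻¹ f (x.y)
  have key1 : ∀ c : G ⧸ H,
      c ∈ g ⁻¹' (g '' cosetMul G H (x₀ : G ⧸ H) (y₀ : G ⧸ H)) ↔ P c := by
    intro c
    obtain ⟨c₀, rfl⟩ := QuotientGroup.mk_surjective c
    rw [Set.mem_preimage, Set.mem_image]
    constructor
    · rintro ⟨d, hd, hdc⟩
      rw [mem_cosetMul] at hd
      obtain ⟨h, hh, rfl⟩ := hd
      rw [hg, hg, QuotientGroup.eq] at hdc
      refine ⟨h, hh, (x₀ * h * y₀)⁻¹ * c₀, hdc, ?_⟩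
      have e : x₀ * h * y₀ * ((x₀ * h * y₀)⁻¹ * c₀) = c₀ := by group
      rw [e]
    · rintro ⟨h, hh, k, hk, hc⟩
      refine ⟨((x₀ * h * y₀ : G) : G ⧸ H), mem_cosetMul.mpr ⟨h, hh, rfl⟩, ?_⟩
      rw [hc, hg, hg, QuotientGroup.eq]
      have e : (x₀ * h * y₀)⁻¹ * (x₀ * h * y₀ * k) = k := by group
      rw [e]; exact hk
  -- key2 : f⁻¹ (f x . f y)
  have key2 : ∀ c : G ⧸ H,
      c ∈ g ⁻¹' (cosetMul G K (g (x₀ : G ⧸ H)) (g (y₀ : G ⧸ H))) ↔ P c := by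
    intro c
    obtain ⟨c₀, rfl⟩ := QuotientGroup.mk_surjective c
    rw [Set.mem_preimage, hg, hg, hg, mem_cosetMul]
    constructor
    · rintro ⟨k, hk, hc⟩
      rw [QuotientGroup.eq] at hc
      have hc' : (x₀ * k * y₀)⁻¹ * c₀ ∈ K := by
        have e : (x₀ * k * y₀)⁻¹ * c₀ = (c₀⁻¹ * (x₀ * k * y₀))⁻¹ := by group
        rw [e]; exact K.inv_mem hc
      refine QtoP k ((x₀ * k * y₀)⁻¹ * c₀) hk hc' _ ?_
      have e : x₀ * k * y₀ * ((x₀ * k * y₀)⁻¹ * c₀) = c₀ := by group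
      rw [e]
    · rintro ⟨h, hh, k, hk, hc⟩
      rw [QuotientGroup.eq] at hc
      refine ⟨h, hHK hh, ?_⟩
      rw [QuotientGroup.eq]
      have e : c₀⁻¹ * (x₀ * h * y₀) = (c₀⁻¹ * (x₀ * h * y₀ * k)) * k⁻¹ := by group
      rw [e]
      exact K.mul_mem (hHK hc) (K.inv_mem hk)
  -- key3 : x . f⁻¹ f y
  have key3 : ∀ c : G ⧸ H,
      c ∈ hProd (cosetMul G H) {(x₀ : G ⧸ H)} (g ⁻¹' {g (y₀ : G ⧸ H)}) ↔ P c := by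
    intro c
    rw [mem_hProd_left]
    constructor
    · rintro ⟨b, hb, hcb⟩
      obtain ⟨b₀, rfl⟩ := QuotientGroup.mk_surjective b
      rw [Set.mem_preimage, Set.mem_singleton_iff, hg, hg, QuotientGroup.eq] at hb
      rw [mem_cosetMul] at hcb
      obtain ⟨h, hh, hc⟩ := hcb
      have hb' : y₀⁻¹ * b₀ ∈ K := by
        have e : y₀⁻¹ * b₀ = (b₀⁻¹ * y₀)⁻¹ := by group
        rw [e]; exact K.inv_mem hb
      refine ⟨h, hh, y₀⁻¹ * b₀, hb', ?_⟩
      rw [hc]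
      have e : x₀ * h * b₀ = x₀ * h * y₀ * (y₀⁻¹ * b₀) := by group
      rw [e]
    · rintro ⟨h, hh, k, hk, hc⟩
      refine ⟨((y₀ * k : G) : G ⧸ H), ?_, ?_⟩
      · rw [Set.mem_preimage, Set.mem_singleton_iff, hg, hg, QuotientGroup.eq]
        have e : (y₀ * k)⁻¹ * y₀ = k⁻¹ := by group
        rw [e]; exact K.inv_mem hk
      · rw [mem_cosetMul]
        refine ⟨h, hh, ?_⟩
        rw [hc]
        have e : x₀ * h * y₀ * k = x₀ * h * (y₀ * k) := by group
        rw [e]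
  -- key4 : f⁻¹ f x . y
  have key4 : ∀ c : G ⧸ H,
      c ∈ hProd (cosetMul G H) (g ⁻¹' {g (x₀ : G ⧸ H)}) {(y₀ : G ⧸ H)} ↔ P c := by
    intro c
    rw [mem_hProd_right]
    constructor
    · rintro ⟨a, ha, hca⟩
      obtain ⟨a₀, rfl⟩ := QuotientGroup.mk_surjective a
      rw [Set.mem_preimage, Set.mem_singleton_iff, hg, hg, QuotientGroup.eq] at ha
      rw [mem_cosetMul] at hca
      obtain ⟨h, hh, hc⟩ := hca
      have ha' : x₀⁻¹ * a₀ ∈ K := by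
        have e : x₀⁻¹ * a₀ = (a₀⁻¹ * x₀)⁻¹ := by group
        rw [e]; exact K.inv_mem ha
      refine QtoP ((x₀⁻¹ * a₀) * h) 1 (K.mul_mem ha' (hHK hh)) K.one_mem _ ?_
      rw [hc]
      have e : a₀ * h * y₀ = x₀ * (x₀⁻¹ * a₀ * h) * y₀ * 1 := by group
      rw [e]
    · rintro ⟨h, hh, k, hk, hc⟩
      have hmem : h * y₀ * k ∈ (H : Set G) * ({y₀} : Set G) * (K : Set G) :=
        Set.mul_mem_mul (Set.mul_mem_mul hh rfl) hk
      rw [← (hinv y₀).1, (hinv y₀).2] at hmem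
      obtain ⟨u, hu, h₂, hh₂, huv⟩ := Set.mem_mul.mp hmem
      obtain ⟨k₁, hk₁, w, hw, hwu⟩ := Set.mem_mul.mp hu
      rw [hw] at hwu
      rw [← hwu] at huv
      refine ⟨((x₀ * k₁ : G) : G ⧸ H), ?_, ?_⟩
      · rw [Set.mem_preimage, Set.mem_singleton_iff, hg, hg, QuotientGroup.eq]
        have e : (x₀ * k₁)⁻¹ * x₀ = k₁⁻¹ := by group
        rw [e]; exact K.inv_mem hk₁
      · rw [mem_cosetMul]
        refine ⟨1, H.one_mem, ?_⟩
        rw [hc, QuotientGroup.eq]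
        have e : (x₀ * h * y₀ * k)⁻¹ * (x₀ * k₁ * 1 * y₀) =
            (x₀ * (h * y₀ * k))⁻¹ * (x₀ * k₁ * y₀) := by group
        rw [e, ← huv]
        have e2 : (x₀ * (k₁ * y₀ * h₂))⁻¹ * (x₀ * k₁ * y₀) = h₂⁻¹ := by group
        rw [e2]
        exact H.inv_mem hh₂
  refine ⟨?_, ?_, ?_⟩
  · ext c; rw [key1 c, key2 c]
  · ext c; rw [key1 c, key3 c]
  · ext c; rw [key1 c, key4 c]

end Aux

theorem canonical_map_is_reflector {G : Type*} [Group G] (H K : Subgroup G)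
    (hHK : H ≤ K) (hinv : InvMod H K) :
    IsReflector (cosetMul G H) (cosetMul G K)
      (fun a : G ⧸ H => ((Quotient.out a : G) : G ⧸ K)) :=
  reflector_aux H K hHK hinv _ (out_mk hHK)
end

section
/- Let G be a group, H a subgroup, and h : G/H → L a reflector from the coset hypergroup G/H to a hypergroup L. Let 1 = h(H) and K = {x ∈ G : h(xH) = 1}. Then K is a subgroup of G containing H. -/
lemma mk_eq_mk_one_iff {G : Type*} [Group G] (H : Subgroup G) (x : G) :
    ((x : G ⧸ H) = ((1 : G) : G ⧸ H)) ↔ x ∈ H := by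
  rw [QuotientGroup.eq]
  simp

lemma cosetMul_one_one {G : Type*} [Group G] (H : Subgroup G) :
    cosetMul G H (((1 : G) : G ⧸ H)) (((1 : G) : G ⧸ H)) = {((1 : G) : G ⧸ H)} := by
  ext c
  constructor
  · rintro ⟨x, y, k, hk, hx, hy, rfl⟩
    have hx' : x ∈ H := (mk_eq_mk_one_iff H x).1 hx.symm
    have hy' : y ∈ H := (mk_eq_mk_one_iff H y).1 hy.symm
    exact (mk_eq_mk_one_iff H _).2 (H.mul_mem (H.mul_mem hx' hk) hy')
  · rintro rfl
    exact ⟨1, 1, 1, H.one_mem, rfl, rfl, by simp⟩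

theorem reflector_kernel_subgroup {G L : Type*} [Group G] (H : Subgroup G)
    (mL : L → L → Set L) (hL : IsHypergroup mL)
    (h : G ⧸ H → L) (hr : IsReflector (cosetMul G H) mL h) :
    ∃ K : Subgroup G,
      (K : Set G) = {x : G | h ((x : G) : G ⧸ H) = h (((1 : G) : G) : G ⧸ H)} ∧
      (H : Set G) ⊆ (K : Set G) := by
  obtain ⟨hsurj, hrf⟩ := hr
  -- closure under multiplication
  have hmul : ∀ a b : G, h (a : G ⧸ H) = h ((1 : G) : G ⧸ H) →
      h (b : G ⧸ H) = h ((1 : G) : G ⧸ H) →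
      h ((a * b : G) : G ⧸ H) = h ((1 : G) : G ⧸ H) := by
    intro a b ha hb
    have hmem : ((a * b : G) : G ⧸ H) ∈ cosetMul G H (a : G ⧸ H) (b : G ⧸ H) :=
      ⟨a, b, 1, H.one_mem, rfl, rfl, by simp⟩
    have h1 := (hrf (a : G ⧸ H) (b : G ⧸ H)).1
    have h2 := (hrf ((1 : G) : G ⧸ H) ((1 : G) : G ⧸ H)).1
    rw [ha, hb] at h1
    rw [cosetMul_one_one] at h2
    have hmem' : ((a * b : G) : G ⧸ H) ∈ h ⁻¹' (h '' cosetMul G H (a : G ⧸ H) (b : G ⧸ H)) :=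
      Set.subset_preimage_image h _ hmem
    rw [h1, ← h2, Set.image_singleton] at hmem'
    simpa using hmem'
  -- closure under inverse
  have hinv : ∀ a : G, h (a : G ⧸ H) = h ((1 : G) : G ⧸ H) →
      h ((a⁻¹ : G) : G ⧸ H) = h ((1 : G) : G ⧸ H) := by
    intro a ha
    have hmem : ((1 : G) : G ⧸ H) ∈ cosetMul G H (a : G ⧸ H) ((a⁻¹ : G) : G ⧸ H) :=
      ⟨a, a⁻¹, 1, H.one_mem, rfl, rfl, by simp⟩
    have h1 := (hrf (a : G ⧸ H) ((a⁻¹ : G) : G ⧸ H)).1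
    have h2 := (hrf ((1 : G) : G ⧸ H) ((a⁻¹ : G) : G ⧸ H))
    rw [ha] at h1
    have hmem' : ((1 : G) : G ⧸ H) ∈
        h ⁻¹' (h '' cosetMul G H (a : G ⧸ H) ((a⁻¹ : G) : G ⧸ H)) :=
      Set.subset_preimage_image h _ hmem
    rw [h1, ← h2.1, h2.2.1] at hmem'
    -- unpack hProd membership
    simp only [hProd, Set.mem_iUnion, Set.mem_singleton_iff] at hmem'
    obtain ⟨p, hp, q, hq, hpq⟩ := hmem'
    subst hp
    obtain ⟨x, y, k, hk, hx, hy, hxy⟩ := hpq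
    have hx' : x ∈ H := (mk_eq_mk_one_iff H x).1 hx.symm
    have hxy' : x * k * y ∈ H := (mk_eq_mk_one_iff H _).1 hxy.symm
    have hy' : y ∈ H := by
      have := H.mul_mem (H.inv_mem (H.mul_mem hx' hk)) hxy'
      simpa [mul_assoc] using this
    have hq1 : q = ((1 : G) : G ⧸ H) := by
      rw [hy]
      exact (mk_eq_mk_one_iff H y).2 hy'
    have : h q = h ((a⁻¹ : G) : G ⧸ H) := hq
    rw [hq1] at this
    exact this.symm
  refine ⟨{ carrier := {x : G | h ((x : G) : G ⧸ H) = h (((1 : G) : G) : G ⧸ H)},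
            one_mem' := rfl,
            mul_mem' := fun {a b} ha hb => hmul a b ha hb,
            inv_mem' := fun {a} ha => hinv a ha }, rfl, ?_⟩
  intro x hx
  show h ((x : G) : G ⧸ H) = h ((1 : G) : G ⧸ H)
  rw [(mk_eq_mk_one_iff H x).2 hx]
end

section
/- Let G be a group, H a subgroup, h : G/H → L a reflector, and K = {x ∈ G : h(xH) = h(H)}. Then HxK = KxK for all x ∈ G; i.e., K is invariant modulo H. -/
open Pointwise

section Aux

variable {G L : Type*} [Group G] {H : Subgroup G} {mL : L → L → Set L} {h : G ⧸ H → L}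

private lemma coset_eq_of_right {g η : G} (hη : η ∈ H) :
    ((g * η : G) : G ⧸ H) = (g : G ⧸ H) := by
  refine (QuotientGroup.eq).mpr ?_
  have : (g * η)⁻¹ * g = η⁻¹ := by group
  rw [this]; exact H.inv_mem hη

private lemma cosetMul_mk_one (g : G) :
    cosetMul G H (g : G ⧸ H) ((1 : G) : G ⧸ H) = {(g : G ⧸ H)} := by
  ext c
  constructor
  · rintro ⟨x, y, η, hη, hx, hy, rfl⟩
    have hx' : g⁻¹ * x ∈ H := (QuotientGroup.eq).mp hx
    have hy' : y ∈ H := by simpa using (QuotientGroup.eq).mp hy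
    have hm : g⁻¹ * (x * η * y) ∈ H := by
      have e : g⁻¹ * (x * η * y) = (g⁻¹ * x) * η * y := by group
      rw [e]; exact H.mul_mem (H.mul_mem hx' hη) hy'
    simp only [Set.mem_singleton_iff]
    exact ((QuotientGroup.eq).mpr hm).symm
  · rintro rfl
    exact ⟨g, 1, 1, H.one_mem, rfl, rfl, by rw [mul_one, mul_one]⟩

private lemma phi_mul_right (hr : IsReflector (cosetMul G H) mL h)
    {k : G} (hk : h ((k : G ⧸ H)) = h (((1 : G) : G ⧸ H))) (g : G) :
    h (((g * k : G) : G ⧸ H)) = h ((g : G ⧸ H)) := by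
  obtain ⟨e1, -, -⟩ := hr.2 (g : G ⧸ H) (k : G ⧸ H)
  obtain ⟨f1, -, -⟩ := hr.2 (g : G ⧸ H) ((1 : G) : G ⧸ H)
  have hmem : ((g * k : G) : G ⧸ H) ∈ cosetMul G H (g : G ⧸ H) (k : G ⧸ H) :=
    ⟨g, k, 1, H.one_mem, rfl, rfl, by rw [mul_one]⟩
  have h1 : ((g * k : G) : G ⧸ H) ∈ h ⁻¹' (h '' (cosetMul G H (g : G ⧸ H) (k : G ⧸ H))) :=
    Set.mem_preimage.mpr (Set.mem_image_of_mem h hmem)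
  rw [e1, hk, ← f1, cosetMul_mk_one] at h1
  simpa using h1

private lemma fiber_decomp (hr : IsReflector (cosetMul G H) mL h)
    {a g : G} (hg : h ((g : G ⧸ H)) = h ((a : G ⧸ H))) :
    ∃ η ∈ H, ∃ k : G, h ((k : G ⧸ H)) = h (((1 : G) : G ⧸ H)) ∧ g = a * η * k := by
  obtain ⟨-, e2, -⟩ := hr.2 (a : G ⧸ H) ((1 : G) : G ⧸ H)
  rw [cosetMul_mk_one] at e2
  have h1 : (g : G ⧸ H) ∈ h ⁻¹' (h '' ({(a : G ⧸ H)} : Set (G ⧸ H))) := by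
    simp only [Set.image_singleton, Set.mem_preimage, Set.mem_singleton_iff]
    exact hg
  rw [e2] at h1
  simp only [hProd, Set.mem_iUnion, Set.mem_singleton_iff, Set.mem_preimage,
    exists_prop] at h1
  obtain ⟨a', ha', b, hb, hmem⟩ := h1
  subst ha'
  obtain ⟨x, y, η, hη, hx, hy, hc⟩ := hmem
  have hx' : a⁻¹ * x ∈ H := (QuotientGroup.eq).mp hx
  have hc' : (x * η * y)⁻¹ * g ∈ H := (QuotientGroup.eq).mp hc.symm
  refine ⟨(a⁻¹ * x) * η, H.mul_mem hx' hη, y * ((x * η * y)⁻¹ * g), ?_, by group⟩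
  have : ((y * ((x * η * y)⁻¹ * g) : G) : G ⧸ H) = (y : G ⧸ H) := coset_eq_of_right hc'
  rw [this, ← hy, hb]

private lemma phi_mul_left (hr : IsReflector (cosetMul G H) mL h)
    {k : G} (hk : h ((k : G ⧸ H)) = h (((1 : G) : G ⧸ H))) (g : G) :
    ∃ η ∈ H, h (((k * g : G) : G ⧸ H)) = h (((η * g : G) : G ⧸ H)) := by
  obtain ⟨e1, -, -⟩ := hr.2 (k : G ⧸ H) (g : G ⧸ H)
  obtain ⟨f1, -, -⟩ := hr.2 ((1 : G) : G ⧸ H) (g : G ⧸ H)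
  have hmem : ((k * g : G) : G ⧸ H) ∈ cosetMul G H (k : G ⧸ H) (g : G ⧸ H) :=
    ⟨k, g, 1, H.one_mem, rfl, rfl, by rw [mul_one]⟩
  have h1 : ((k * g : G) : G ⧸ H) ∈ h ⁻¹' (h '' (cosetMul G H (k : G ⧸ H) (g : G ⧸ H))) :=
    Set.mem_preimage.mpr (Set.mem_image_of_mem h hmem)
  rw [e1, hk, ← f1] at h1
  obtain ⟨c, hc, hval⟩ := Set.mem_preimage.mp h1
  obtain ⟨x, y, η, hη, hx, hy, rfl⟩ := hc
  have hxH : x ∈ H := by simpa using (QuotientGroup.eq).mp hx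
  have hy' : g⁻¹ * y ∈ H := (QuotientGroup.eq).mp hy
  refine ⟨x * η, H.mul_mem hxH hη, ?_⟩
  have e : ((x * η * y : G) : G ⧸ H) = (((x * η) * g : G) : G ⧸ H) := by
    have : x * η * y = ((x * η) * g) * (g⁻¹ * y) := by group
    rw [this]; exact coset_eq_of_right hy'
  rw [← hval, e]

private lemma swap_lemma (hr : IsReflector (cosetMul G H) mL h)
    {η k : G} (hη : η ∈ H) (hk : h ((k : G ⧸ H)) = h (((1 : G) : G ⧸ H))) (x : G) :
    ∃ k' : G, h ((k' : G ⧸ H)) = h (((1 : G) : G ⧸ H)) ∧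
      ∃ η' ∈ H, η * x * k = k' * x * η' := by
  obtain ⟨-, -, e3⟩ := hr.2 (((1 : G) : G ⧸ H)) ((x : G ⧸ H))
  have hval : h (((η * x * k : G) : G ⧸ H)) = h (((η * x : G) : G ⧸ H)) :=
    phi_mul_right hr hk (η * x)
  have hmem0 : ((η * x : G) : G ⧸ H) ∈ cosetMul G H ((1 : G) : G ⧸ H) (x : G ⧸ H) :=
    ⟨1, x, η, hη, rfl, rfl, by rw [one_mul]⟩
  have h1 : ((η * x * k : G) : G ⧸ H) ∈
      h ⁻¹' (h '' (cosetMul G H ((1 : G) : G ⧸ H) (x : G ⧸ H))) := by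
    refine Set.mem_preimage.mpr ?_
    rw [hval]; exact Set.mem_image_of_mem h hmem0
  rw [e3] at h1
  simp only [hProd, Set.mem_iUnion, Set.mem_singleton_iff, Set.mem_preimage,
    exists_prop] at h1
  obtain ⟨b, hb, y', hy', hmem⟩ := h1
  subst hy'
  obtain ⟨x', y, η₀, hη₀, hx', hy, hc⟩ := hmem
  have hη₁ : x⁻¹ * y ∈ H := (QuotientGroup.eq).mp hy
  have hη₂ : (x' * η₀ * y)⁻¹ * (η * x * k) ∈ H := (QuotientGroup.eq).mp hc.symm
  refine ⟨x' * η₀, ?_, (x⁻¹ * y) * ((x' * η₀ * y)⁻¹ * (η * x * k)),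
    H.mul_mem hη₁ hη₂, by group⟩
  have e : ((x' * η₀ : G) : G ⧸ H) = (x' : G ⧸ H) := coset_eq_of_right hη₀
  rw [e, ← hx', hb]

private lemma mem3 {A B : Set G} {x g : G} :
    g ∈ A * ({x} : Set G) * B ↔ ∃ a ∈ A, ∃ b ∈ B, g = a * x * b := by
  constructor
  · rintro ⟨ax, ⟨a, ha, x', hx', rfl⟩, b, hb, rfl⟩
    rw [Set.mem_singleton_iff] at hx'
    exact ⟨a, ha, b, hb, by rw [hx']⟩
  · rintro ⟨a, ha, b, hb, rfl⟩
    exact Set.mul_mem_mul (Set.mul_mem_mul ha rfl) hb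

end Aux

theorem reflector_kernel_invariant {G L : Type*} [Group G] (H : Subgroup G)
    (mL : L → L → Set L) (hL : IsHypergroup mL)
    (h : G ⧸ H → L) (hr : IsReflector (cosetMul G H) mL h) :
    ∀ x : G,
      ({y : G | h ((y : G) : G ⧸ H) = h (((1 : G) : G) : G ⧸ H)} * ({x} : Set G) *
        {y : G | h ((y : G) : G ⧸ H) = h (((1 : G) : G) : G ⧸ H)} =
       (H : Set G) * ({x} : Set G) *
        {y : G | h ((y : G) : G ⧸ H) = h (((1 : G) : G) : G ⧸ H)}) ∧
      ({y : G | h ((y : G) : G ⧸ H) = h (((1 : G) : G) : G ⧸ H)} * ({x} : Set G) *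
        {y : G | h ((y : G) : G ⧸ H) = h (((1 : G) : G) : G ⧸ H)} =
       {y : G | h ((y : G) : G ⧸ H) = h (((1 : G) : G) : G ⧸ H)} * ({x} : Set G) *
        (H : Set G)) := by
  intro x
  set K : Set G := {y : G | h ((y : G) : G ⧸ H) = h (((1 : G) : G) : G ⧸ H)} with hK
  have hHK : ∀ η : G, η ∈ H → η ∈ K := by
    intro η hη
    show h ((η : G ⧸ H)) = h (((1 : G) : G ⧸ H))
    have : ((η : G) : G ⧸ H) = (((1 : G) * η : G) : G ⧸ H) := by rw [one_mul]
    rw [this, coset_eq_of_right hη]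
  have main : ∀ g : G, g ∈ K * ({x} : Set G) * K →
      ∃ η ∈ H, ∃ k ∈ K, g = η * x * k := by
    intro g hg
    obtain ⟨k₁, hk₁, k₂, hk₂, rfl⟩ := mem3.mp hg
    obtain ⟨η, hη, hval⟩ := phi_mul_left hr hk₁ x
    obtain ⟨η₂, hη₂, k₃, hk₃, heq⟩ := fiber_decomp hr hval
    have hk₃k₂ : h (((k₃ * k₂ : G) : G ⧸ H)) = h (((1 : G) : G ⧸ H)) := by
      rw [phi_mul_right hr hk₂ k₃]; exact hk₃
    have hb : (η₂ * (k₃ * k₂)) ∈ K := by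
      show h (((η₂ * (k₃ * k₂) : G) : G ⧸ H)) = h (((1 : G) : G ⧸ H))
      rw [phi_mul_right hr hk₃k₂ η₂]
      exact hHK η₂ hη₂
    refine ⟨η, hη, η₂ * (k₃ * k₂), hb, ?_⟩
    have : k₁ * x * k₂ = (η * x * η₂ * k₃) * k₂ := by rw [← heq]
    rw [this]; group
  constructor
  · ext g
    constructor
    · intro hg
      obtain ⟨η, hη, k, hk, rfl⟩ := main g hg
      exact mem3.mpr ⟨η, hη, k, hk, rfl⟩
    · intro hg
      obtain ⟨η, hη, k, hk, rfl⟩ := mem3.mp hg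
      exact mem3.mpr ⟨η, hHK η hη, k, hk, rfl⟩
  · ext g
    constructor
    · intro hg
      obtain ⟨η, hη, k, hk, rfl⟩ := main g hg
      obtain ⟨k', hk', η', hη', heq⟩ := swap_lemma hr hη hk x
      rw [heq]
      exact mem3.mpr ⟨k', hk', η', hη', rfl⟩
    · intro hg
      obtain ⟨k, hk, η, hη, rfl⟩ := mem3.mp hg
      exact mem3.mpr ⟨k, hk, η, hHK η hη, rfl⟩
end

section
/- Let K be a set with |K| ≥ 3 and distinguished element e. Define a multivalued operation on K by: x.e = {x} for all x; and x.y = K \ {x} whenever y ≠ e. Then K with this operation is a hypergroup (associative and reproductive), and moreover for every x ≠ e one has x.x = K \ {x} and x.(x.x) = K. -/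
lemma mem_hProd {α : Type*} (m : α → α → Set α) (A B : Set α) (t : α) :
    t ∈ hProd m A B ↔ ∃ a ∈ A, ∃ b ∈ B, t ∈ m a b := by
  simp [hProd]

lemma exists_two_ne {K : Type*} (hK : ∃ a b c : K, a ≠ b ∧ a ≠ c ∧ b ≠ c) (x : K) :
    ∃ u v : K, u ≠ v ∧ u ≠ x ∧ v ≠ x := by
  obtain ⟨a, b, c, hab, hac, hbc⟩ := hK
  rcases eq_or_ne a x with rfl | ha
  · exact ⟨b, c, hbc, hab.symm, hac.symm⟩
  · rcases eq_or_ne b x with rfl | hb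
    · exact ⟨a, c, hac, ha, hbc.symm⟩
    · exact ⟨a, b, hab, ha, hb⟩

lemma exists_ne_ne {K : Type*} (hK : ∃ a b c : K, a ≠ b ∧ a ≠ c ∧ b ≠ c) (x y : K) :
    ∃ u : K, u ≠ x ∧ u ≠ y := by
  obtain ⟨u, v, huv, hux, hvx⟩ := exists_two_ne hK x
  rcases eq_or_ne u y with rfl | h
  · exact ⟨v, hvx, (huv.symm : v ≠ u)⟩
  · exact ⟨u, hux, h⟩

theorem simple_example_hypergroup {K : Type*}
    (hK : ∃ a b c : K, a ≠ b ∧ a ≠ c ∧ b ≠ c) (e : K)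
    (m : K → K → Set K)
    (hme : ∀ x : K, m x e = {x})
    (hmy : ∀ x y : K, y ≠ e → m x y = {x}ᶜ) :
    IsHypergroup m ∧
    ∀ x : K, x ≠ e → m x x = {x}ᶜ ∧ hProd m {x} (m x x) = Set.univ := by
  have mem_me : ∀ a t : K, t ∈ m a e ↔ t = a := by
    intro a t; rw [hme]; exact Set.mem_singleton_iff
  have mem_my : ∀ a b t : K, b ≠ e → (t ∈ m a b ↔ t ≠ a) := by
    intro a b t hb; rw [hmy _ _ hb]; exact Iff.rfl
  constructor
  · refine ⟨⟨e⟩, ?_, ?_⟩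
    · intro x y z
      ext t
      rw [mem_hProd, mem_hProd]
      rcases eq_or_ne z e with hz | hz
      · rw [hz]
        constructor
        · rintro ⟨a, ha, b, hb, ht⟩
          rw [Set.mem_singleton_iff] at hb; subst hb
          rw [mem_me] at ht
          exact ⟨x, rfl, y, (mem_me _ _).mpr rfl, by rw [ht]; exact ha⟩
        · rintro ⟨a, ha, b, hb, ht⟩
          rw [Set.mem_singleton_iff] at ha; subst ha
          rw [mem_me] at hb; subst hb
          exact ⟨t, ht, e, rfl, (mem_me _ _).mpr rfl⟩
      · rcases eq_or_ne y e with hy | hy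
        · rw [hy]
          constructor
          · rintro ⟨a, ha, b, hb, ht⟩
            rw [Set.mem_singleton_iff] at hb
            rw [mem_me] at ha
            have hbe : b ≠ e := by rw [hb]; exact hz
            rw [mem_my _ _ _ hbe] at ht
            exact ⟨x, rfl, b, (mem_my _ _ _ hz).mpr hbe,
              (mem_my _ _ _ hbe).mpr (by rw [← ha]; exact ht)⟩
          · rintro ⟨a, ha, b, hb, ht⟩
            rw [Set.mem_singleton_iff] at ha
            rw [mem_my _ _ _ hz] at hb
            rw [mem_my _ _ _ hb] at ht
            exact ⟨x, (mem_me _ _).mpr rfl, z, rfl,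
              (mem_my _ _ _ hz).mpr (by rw [← ha]; exact ht)⟩
        · constructor
          · rintro -
            rcases eq_or_ne t x with rfl | h
            · exact ⟨t, rfl, e, (mem_my _ _ _ hz).mpr (Ne.symm hy), (mem_me _ _).mpr rfl⟩
            · obtain ⟨u, huy, hue⟩ := exists_ne_ne hK y e
              exact ⟨x, rfl, u, (mem_my _ _ _ hz).mpr huy, (mem_my _ _ _ hue).mpr h⟩
          · rintro -
            obtain ⟨u, v, huv, hux, hvx⟩ := exists_two_ne hK x
            rcases eq_or_ne u t with rfl | h
            · exact ⟨v, (mem_my _ _ _ hy).mpr hvx, z, rfl, (mem_my _ _ _ hz).mpr huv⟩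
            · exact ⟨u, (mem_my _ _ _ hy).mpr hux, z, rfl, (mem_my _ _ _ hz).mpr (Ne.symm h)⟩
    · intro x
      constructor
      · rw [Set.eq_univ_iff_forall]
        intro t
        rw [mem_hProd]
        rcases eq_or_ne t x with rfl | h
        · exact ⟨t, rfl, e, trivial, (mem_me _ _).mpr rfl⟩
        · obtain ⟨u, hue, -⟩ := exists_ne_ne hK e e
          exact ⟨x, rfl, u, trivial, (mem_my _ _ _ hue).mpr h⟩
      · rw [Set.eq_univ_iff_forall]
        intro t
        rw [mem_hProd]
        rcases eq_or_ne x e with rfl | hx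
        · exact ⟨t, trivial, x, rfl, (mem_me _ _).mpr rfl⟩
        · obtain ⟨u, hut, -⟩ := exists_ne_ne hK t t
          exact ⟨u, trivial, x, rfl, (mem_my _ _ _ hx).mpr hut.symm⟩
  · intro x hx
    refine ⟨hmy _ _ hx, ?_⟩
    rw [Set.eq_univ_iff_forall]
    intro t
    rw [mem_hProd]
    rcases eq_or_ne t x with rfl | h
    · exact ⟨t, rfl, e, (mem_my _ _ _ hx).mpr (fun he => hx he.symm), (mem_me _ _).mpr rfl⟩
    · obtain ⟨u, hux, hue⟩ := exists_ne_ne hK x e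
      exact ⟨x, rfl, u, (mem_my _ _ _ hx).mpr hux, (mem_my _ _ _ hue).mpr h⟩
end

section
/- Let (H,+) be a group with identity 0 and 𝒫 a partition of H with classes x̄ (class of x), such that {0} ∈ 𝒫 and the operation x.y = x + ȳ is associative (equivalently x̄ + ȳ = closure of x + ȳ under classes for all x,y). Suppose that for every class A ∈ 𝒫 with A ≠ {0}, some iterated sum A + A + ⋯ + A equals H. Then the hypergroup (H, .) is simple: every reflector from H is either injective or has trivial (one-point) image. -/
open Pointwise

/-- Iterated set sum A, A + A, A + A + A, ... -/
def sumIter {H : Type*} [Add H] (A : Set H) : ℕ → Set H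
  | 0 => A
  | n + 1 => sumIter A n + A

theorem utumi_construction_simple {H : Type*} [AddGroup H]
    (cl : H → Set H)
    (hmem : ∀ x : H, x ∈ cl x)
    (hpart : ∀ x y : H, y ∈ cl x → cl y = cl x)
    (h0 : cl 0 = {0})
    (m : H → H → Set H)
    (hm : ∀ x y : H, m x y = (fun t => x + t) '' cl y)
    (hassoc : HAssoc m)
    (hsum : ∀ x : H, cl x ≠ {0} → ∃ n : ℕ, sumIter (cl x) n = Set.univ)
    {K : Type*} (mK : K → K → Set K) (f : H → K)
    (hf : IsReflector m mK f) :
    Function.Injective f ∨ Subsingleton K := by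
  obtain ⟨hsurj, hrefl⟩ := hf
  have hmx0 : ∀ x : H, m x 0 = {x} := by
    intro x; rw [hm, h0]; simp
  have key : ∀ x : H, f ⁻¹' {f x} = ⋃ b ∈ f ⁻¹' {f 0}, (fun t => x + t) '' cl b := by
    intro x
    have h := (hrefl x 0).2.1
    rw [hmx0] at h
    simpa [hProd, hm, Set.image_singleton] using h
  have hNU : (⋃ b ∈ f ⁻¹' {f 0}, cl b) = f ⁻¹' {f 0} := by
    have h := key 0
    simp only [zero_add] at h
    simpa using h.symm
  have key' : ∀ x : H, f ⁻¹' {f x} = (fun t => x + t) '' (f ⁻¹' {f 0}) := by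
    intro x
    rw [key x]
    conv_rhs => rw [← hNU]
    rw [Set.image_iUnion₂]
  have hadd : ∀ a ∈ f ⁻¹' {f 0}, ∀ b ∈ f ⁻¹' {f 0}, a + b ∈ f ⁻¹' {f 0} := by
    intro a ha b hb
    have hfa : f a = f 0 := ha
    have : a + b ∈ f ⁻¹' {f a} := by
      rw [key' a]; exact ⟨b, hb, rfl⟩
    rwa [hfa] at this
  by_cases hN1 : f ⁻¹' {f 0} = {0}
  · left
    intro a b hab
    have : a ∈ f ⁻¹' {f b} := by simp [hab]
    rw [key' b, hN1] at this
    obtain ⟨t, ht, hte⟩ := this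
    simp only [Set.mem_singleton_iff] at ht
    subst ht
    simpa using hte.symm
  · right
    have h0mem : (0 : H) ∈ f ⁻¹' {f 0} := rfl
    have ⟨a, haN, ha0⟩ : ∃ a ∈ f ⁻¹' {f 0}, a ≠ 0 := by
      by_contra hc
      push_neg at hc
      apply hN1
      ext t
      simp only [Set.mem_singleton_iff]
      exact ⟨fun ht => hc t ht, fun ht => ht ▸ h0mem⟩
    have hclaN : cl a ⊆ f ⁻¹' {f 0} := by
      rw [← hNU]
      exact Set.subset_biUnion_of_mem haN
    have hcla0 : cl a ≠ {0} := by
      intro h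
      exact ha0 (by have := hmem a; rw [h] at this; exact this)
    obtain ⟨n, hn⟩ := hsum a hcla0
    have hiter : ∀ k : ℕ, sumIter (cl a) k ⊆ f ⁻¹' {f 0} := by
      intro k
      induction k with
      | zero => exact hclaN
      | succ k ih =>
        intro x hx
        obtain ⟨s, hs, c, hc, rfl⟩ := Set.mem_add.mp hx
        exact hadd s (ih hs) c (hclaN hc)
    have hNuniv : ∀ x : H, f x = f 0 := by
      intro x
      have : x ∈ sumIter (cl a) n := by rw [hn]; trivial
      exact hiter n this
    constructor
    intro k1 k2
    obtain ⟨x1, rfl⟩ := hsurj k1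
    obtain ⟨x2, rfl⟩ := hsurj k2
    rw [hNuniv x1, hNuniv x2]
end
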